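/- arXiv:2004.10163 — 5 statements merged into one kernel-verified Lean document; each statement's English description precedes it below -/
import Mathlib

section
/- Let β be the Kertz constant. There exists a strictly decreasing, continuously differentiable function y : [0,1] → [0,1] with y(0) = 1 and y(1) = 0 satisfying both: (i) y'(t) = y(t)·(log y(t) − 1) − (1/β − 1) for all t ∈ [0,1] (with y log y interpreted as 0 when y = 0), and (ii) exp(∫₀ᵗ log y(s) ds) = −β·y'(t) for all t ∈ [0,1). -/
/-!
With `c = 1/β - 1 > 0` and `f u = c - u (log u - 1)`, which is positive on `[0,1]`, the
equation is `y' = -f(y)`. Separating variables, the solution through `y(0) = 1` is the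
inverse of `u ↦ ∫ᵤ¹ 1/f`; the defining equation of `β` says exactly that it reaches `0` at
time `1`. Since `f' = -log`, along the solution `(log f(y))' = (-log y)(-f(y))/f(y) = log y`,
so `exp ∫₀ᵗ log y = f(y t)/f(1) = β f(y t) = -β y'(t)` because `f(1) = 1/β`.
-/

open Set Filter Real

theorem surjective_of_hasDerivAt_of_le {S S' : ℝ → ℝ} {m : ℝ} (hm : 0 < m)
    (hS : ∀ x, HasDerivAt S (S' x) x) (hle : ∀ x, m ≤ S' x) : Function.Surjective S := by
  have hmono : Monotone fun x => S x - m * x :=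
    monotone_of_hasDerivAt_nonneg (fun x => (hS x).sub ((hasDerivAt_id x).const_mul m))
      fun x => by simpa using hle x
  have hlin_top : Tendsto (fun x => S 0 + m * x) atTop atTop :=
    tendsto_atTop_add_const_left _ _ (tendsto_id.const_mul_atTop hm)
  have hlin_bot : Tendsto (fun x => S 0 + m * x) atBot atBot :=
    tendsto_atBot_add_const_left _ _ (tendsto_id.const_mul_atBot hm)
  refine (continuous_iff_continuousAt.2 fun x => (hS x).continuousAt).surjective
    (tendsto_atTop_mono' _ ?_ hlin_top) (tendsto_atBot_mono' _ ?_ hlin_bot)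
  · filter_upwards [eventually_ge_atTop 0] with x hx
    have := hmono hx
    simp only [mul_zero, sub_zero] at this
    linarith
  · filter_upwards [eventually_le_atBot 0] with x hx
    have := hmono hx
    simp only [mul_zero, sub_zero] at this
    linarith

theorem exists_hasDerivAt_leftInverse_of_le {S S' : ℝ → ℝ} {m : ℝ} (hm : 0 < m)
    (hS : ∀ x, HasDerivAt S (S' x) x) (hle : ∀ x, m ≤ S' x) :
    ∃ R : ℝ → ℝ, StrictMono R ∧ (∀ u, R (S u) = u) ∧
      ∀ t, HasDerivAt R (S' (R t))⁻¹ t := by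
  let e := (strictMono_of_hasDerivAt_pos hS fun x => hm.trans_le (hle x)).orderIsoOfSurjective
    S (surjective_of_hasDerivAt_of_le hm hS hle)
  refine ⟨e.symm, e.symm.strictMono, e.symm_apply_apply, fun t => ?_⟩
  exact (hS _).of_local_left_inverse e.symm.continuous.continuousAt
    (hm.trans_le (hle _)).ne' (Eventually.of_forall e.apply_symm_apply)

/-- `y` is the inverse of `u ↦ ∫ᵤᵇ 1/F`, after freezing `F` outside `[a, b]` so that this
primitive is defined on all of `ℝ` with derivative bounded away from `0`. -/
theorem exists_strictAnti_hasDerivAt_neg {F : ℝ → ℝ} {a b : ℝ} (hab : a ≤ b)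
    (hF : ContinuousOn F (Icc a b)) (hpos : ∀ u ∈ Icc a b, 0 < F u) :
    ∃ y : ℝ → ℝ, StrictAnti y ∧ y 0 = b ∧ y (∫ u in a..b, (F u)⁻¹) = a ∧
      ∀ t, y t ∈ Icc a b → HasDerivAt y (-F (y t)) t := by
  set g : ℝ → ℝ := fun v => (F (projIcc a b hab v))⁻¹ with hg_def
  have hg_mem : ∀ v ∈ Icc a b, g v = (F v)⁻¹ := fun v hv => by
    simp only [hg_def, projIcc_of_mem hab hv]
  have hg : Continuous g :=
    (hF.comp_continuous (continuous_subtype_val.comp continuous_projIcc) fun v =>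
      (projIcc a b hab v).2).inv₀ fun v => (hpos _ (projIcc a b hab v).2).ne'
  obtain ⟨u₀, hu₀, hmax⟩ := isCompact_Icc.exists_isMaxOn (nonempty_Icc.2 hab) hF
  have hle : ∀ v, (F u₀)⁻¹ ≤ g v := fun v =>
    inv_anti₀ (hpos _ (projIcc a b hab v).2) (hmax (projIcc a b hab v).2)
  obtain ⟨R, hR_mono, hR_left, hR_deriv⟩ := exists_hasDerivAt_leftInverse_of_le
    (inv_pos.2 (hpos u₀ hu₀)) (fun u => (hg.integral_hasStrictDerivAt b u).hasDerivAt) hle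
  have hS_a : ∫ v in b..a, g v = -∫ u in a..b, (F u)⁻¹ := by
    rw [intervalIntegral.integral_symm, intervalIntegral.integral_congr fun v hv =>
      hg_mem v (by rwa [uIcc_of_le hab] at hv)]
  refine ⟨fun t => R (-t), fun s t hst => hR_mono (neg_lt_neg hst), ?_, ?_, fun t ht => ?_⟩
  · simpa using hR_left b
  · simpa [hS_a] using hR_left a
  · have := (hR_deriv (-t)).comp t (hasDerivAt_neg t)
    rw [hg_mem _ ht, inv_inv, mul_neg_one] at this
    exact this

theorem continuous_const_sub_mul_log_sub_one (c : ℝ) :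
    Continuous fun u : ℝ => c - u * (log u - 1) :=
  (continuous_const.sub (continuous_mul_log.sub continuous_id)).congr fun u => by
    simp only [Pi.sub_apply, id]; ring

theorem hasDerivAt_const_sub_mul_log_sub_one (c : ℝ) {u : ℝ} (hu : u ≠ 0) :
    HasDerivAt (fun u : ℝ => c - u * (log u - 1)) (-log u) u := by
  refine (((hasDerivAt_id' u).fun_mul ((hasDerivAt_log hu).sub_const 1)).const_sub c).congr_deriv
    ?_
  field_simp
  ring

theorem const_sub_mul_log_sub_one_pos {c u : ℝ} (hc : 0 < c) (hu : u ∈ Icc (0 : ℝ) 1) :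
    0 < c - u * (log u - 1) := by
  have := mul_nonpos_of_nonneg_of_nonpos hu.1 (log_nonpos hu.1 hu.2)
  linarith [hu.1]

theorem hasDerivAt_log_const_sub_mul_log_sub_one {y : ℝ → ℝ} {c t : ℝ} (hc : 0 < c)
    (hyt : y t ∈ Ioc (0 : ℝ) 1) (hy : HasDerivAt y (-(c - y t * (log (y t) - 1))) t) :
    HasDerivAt (fun s => log (c - y s * (log (y s) - 1))) (log (y t)) t := by
  have hf := const_sub_mul_log_sub_one_pos hc (Ioc_subset_Icc_self hyt)
  refine (((hasDerivAt_const_sub_mul_log_sub_one c hyt.1.ne').comp t hy).log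
    hf.ne').congr_deriv ?_
  rw [neg_mul_neg]
  exact mul_div_cancel_right₀ _ hf.ne'

theorem integral_log_eq_log_sub_log {y : ℝ → ℝ} {c a b : ℝ} (hc : 0 < c) (hab : a ≤ b)
    (hy : ∀ t ∈ Icc a b, HasDerivAt y (-(c - y t * (log (y t) - 1))) t)
    (hmem : ∀ t ∈ Icc a b, y t ∈ Ioc (0 : ℝ) 1) :
    ∫ s in a..b, log (y s) =
      log (c - y b * (log (y b) - 1)) - log (c - y a * (log (y a) - 1)) := by
  rw [← uIcc_of_le hab] at hy hmem
  refine intervalIntegral.integral_eq_sub_of_hasDerivAt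
    (fun t ht => hasDerivAt_log_const_sub_mul_log_sub_one hc (hmem t ht) (hy t ht)) ?_
  exact ContinuousOn.intervalIntegrable fun t ht =>
    ((hy t ht).continuousAt.log (hmem t ht).1.ne').continuousWithinAt

/-- **Solution of the Kertz differential equation** (Lemma 6 of the paper): for the Kertz
constant `β` there is a strictly decreasing, continuously differentiable `y : [0,1] → [0,1]`
with `y(0) = 1`, `y(1) = 0`, satisfying `y' = y(log y − 1) − (1/β − 1)` on `[0,1]` and
`exp(∫₀ᵗ log y(s) ds) = −β·y'(t)` on `[0,1)`. -/
theorem kertz_ode_solution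
    (β : ℝ) (hβ : β ∈ Set.Ioo (0:ℝ) 1)
    (hβeq : (∫ y in (0:ℝ)..1, ((1 / β - 1) - y * (Real.log y - 1))⁻¹) = 1) :
    ∃ y y' : ℝ → ℝ,
      StrictAntiOn y (Set.Icc 0 1) ∧
      (∀ t ∈ Set.Icc (0:ℝ) 1, y t ∈ Set.Icc (0:ℝ) 1) ∧
      (∀ t ∈ Set.Icc (0:ℝ) 1, HasDerivWithinAt y (y' t) (Set.Icc 0 1) t) ∧
      ContinuousOn y' (Set.Icc 0 1) ∧
      y 0 = 1 ∧ y 1 = 0 ∧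
      (∀ t ∈ Set.Icc (0:ℝ) 1, y' t = y t * (Real.log (y t) - 1) - (1 / β - 1)) ∧
      (∀ t ∈ Set.Ico (0:ℝ) 1,
        Real.exp (∫ s in (0:ℝ)..t, Real.log (y s)) = -β * y' t) := by
  obtain ⟨hβ0, hβ1⟩ := hβ
  have hc : 0 < 1 / β - 1 := sub_pos.2 (one_lt_one_div hβ0 hβ1)
  obtain ⟨y, hy_anti, hy0, hy1, hy_deriv⟩ := exists_strictAnti_hasDerivAt_neg zero_le_one
    (continuous_const_sub_mul_log_sub_one _).continuousOn
    fun u hu => const_sub_mul_log_sub_one_pos hc hu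
  rw [hβeq] at hy1
  have hy_mem : ∀ t ∈ Icc (0 : ℝ) 1, y t ∈ Icc (0 : ℝ) 1 := fun t ht =>
    ⟨hy1 ▸ hy_anti.antitone ht.2, hy0 ▸ hy_anti.antitone ht.1⟩
  have hy_pos : ∀ t ∈ Ico (0 : ℝ) 1, 0 < y t := fun t ht => hy1 ▸ hy_anti ht.2
  have hy_deriv' : ∀ t ∈ Icc (0 : ℝ) 1,
      HasDerivAt y (-(1 / β - 1 - y t * (log (y t) - 1))) t := fun t ht =>
    hy_deriv t (hy_mem t ht)
  have hy_cont : ContinuousOn y (Icc 0 1) := fun t ht =>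
    (hy_deriv' t ht).continuousAt.continuousWithinAt
  refine ⟨y, fun t => y t * (log (y t) - 1) - (1 / β - 1), hy_anti.strictAntiOn _, hy_mem,
    fun t ht => (hy_deriv' t ht).hasDerivWithinAt.congr_deriv (by ring), ?_, hy0, hy1,
    fun t _ => rfl, fun t ht => ?_⟩
  · exact ((continuous_const_sub_mul_log_sub_one (1 / β - 1)).comp_continuousOn
      hy_cont).neg.congr fun t _ => by simp only [Pi.neg_apply, Function.comp_apply]; ring
  · have hlog := integral_log_eq_log_sub_log hc ht.1
      (fun s hs => hy_deriv' s ⟨hs.1, hs.2.trans ht.2.le⟩)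
      fun s hs =>
        ⟨hy_pos s ⟨hs.1, hs.2.trans_lt ht.2⟩, (hy_mem s ⟨hs.1, hs.2.trans ht.2.le⟩).2⟩
    rw [hlog, exp_sub,
      exp_log (const_sub_mul_log_sub_one_pos hc (hy_mem t (Ico_subset_Icc_self ht))),
      exp_log (const_sub_mul_log_sub_one_pos hc (hy_mem 0 (left_mem_Icc.2 zero_le_one))), hy0,
      log_one]
    field_simp
    ring
end

section
/- Let X_1, …, X_n be independent, nonnegative, integrable random variables forming an m-frequent collection, and let S ⊆ {1,…,n} with |S| ≥ n − k where k ≤ m. Then E[max_{i∈S} X_i] ≥ (1 − k/m)·E[max_{1≤i≤n} X_i]. -/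
open MeasureTheory ProbabilityTheory

noncomputable section

/-!
Let `G` be the group of permutations `π` of the indices that preserve the law of each `X i`.
By independence, the reindexed vector `(X (π i))ᵢ` has the same joint law as `(X i)ᵢ`, so
`E[max_{i ∈ S} X (π i)] = E[max_S X]` for every `π ∈ G`. Fix an outcome and an index `i₀`
attaining `max_i X i`. Right multiplication by a transposition of two equally distributed indices
maps `G` to itself, so `π⁻¹ i₀` is uniformly distributed on the class of `i₀` when `π` is uniform
on `G`. That class has at least `m` elements, at most `k` of which lie outside `S`, so
`π⁻¹ i₀ ∈ S` for at least a fraction `1 - k/m` of `π ∈ G`, and for those `π` the maximum of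
`X (π i)` over `i ∈ S` is the overall maximum. Averaging over `G` and integrating gives the claim.
-/

open Finset Equiv

section Combinatorics

variable {ι β : Type*} [DecidableEq ι]

theorem card_filter_apply_eq_of_mul_swap_mem {G : Finset (Perm ι)} {a b c : ι}
    (hG : ∀ π ∈ G, π * swap a b ∈ G) : #{π ∈ G | π a = c} = #{π ∈ G | π b = c} := by
  refine card_bij' (fun π _ ↦ π * swap a b) (fun π _ ↦ π * swap a b) ?_ ?_ ?_ ?_ <;>
    intro π hπ <;> rw [mem_filter] at hπ
  · exact mem_filter.2 ⟨hG π hπ.1, by simpa using hπ.2⟩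
  · exact mem_filter.2 ⟨hG π hπ.1, by simpa using hπ.2⟩
  · simp [mul_assoc]
  · simp [mul_assoc]

variable [Fintype ι] [DecidableEq β]

def permsPreserving (κ : ι → β) : Finset (Perm ι) :=
  {π | ∀ i, κ (π i) = κ i}

theorem mem_permsPreserving {κ : ι → β} {π : Perm ι} :
    π ∈ permsPreserving κ ↔ ∀ i, κ (π i) = κ i := by
  simp [permsPreserving]

theorem mul_swap_mem_permsPreserving {κ : ι → β} {π : Perm ι} {a b : ι}
    (hπ : π ∈ permsPreserving κ) (hab : κ a = κ b) : π * swap a b ∈ permsPreserving κ := by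
  rw [mem_permsPreserving] at hπ ⊢
  intro i
  rw [Perm.mul_apply, hπ]
  rcases eq_or_ne i a with rfl | hia
  · simp [hab]
  rcases eq_or_ne i b with rfl | hib
  · simp [hab]
  · rw [swap_apply_of_ne_of_ne hia hib]

theorem card_filter_inv_apply_mem_permsPreserving (κ : ι → β) (c : ι) (T : Finset ι) :
    #{π ∈ permsPreserving κ | π⁻¹ c ∈ T}
      = #{j ∈ T | κ j = κ c} * #{π ∈ permsPreserving κ | π c = c} := by
  set P := permsPreserving κ
  have hfiber : ∀ π ∈ {π ∈ P | π⁻¹ c ∈ T}, π⁻¹ c ∈ ({j ∈ T | κ j = κ c} : Finset ι) := by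
    intro π hπ
    rw [mem_filter] at hπ ⊢
    exact ⟨hπ.2, by simpa using (mem_permsPreserving.1 hπ.1 (π⁻¹ c)).symm⟩
  rw [card_eq_sum_card_fiberwise hfiber, ← smul_eq_mul, ← sum_const]
  refine sum_congr rfl fun j hj ↦ ?_
  rw [mem_filter] at hj
  calc #{π ∈ {π ∈ P | π⁻¹ c ∈ T} | π⁻¹ c = j} = #{π ∈ P | π j = c} := by
        rw [filter_filter]
        refine congrArg card (filter_congr fun π _ ↦ ?_)
        rw [Perm.inv_eq_iff_eq]
        constructor
        · rintro ⟨-, rfl⟩; rfl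
        · rintro rfl; exact ⟨by simpa using hj.1, rfl⟩
    _ = #{π ∈ P | π c = c} :=
        card_filter_apply_eq_of_mul_swap_mem fun π hπ ↦ mul_swap_mem_permsPreserving hπ hj.2

theorem one_sub_div_mul_card_permsPreserving_le (κ : ι → β) {c : ι} {S : Finset ι} {m k : ℕ}
    (hm : 0 < m) (hclass : m ≤ #{j | κ j = κ c}) (hS : #Sᶜ ≤ k) :
    (1 - k / m : ℝ) * #(permsPreserving κ) ≤ #{π ∈ permsPreserving κ | π⁻¹ c ∈ S} := by
  set N := #{j | κ j = κ c}
  set s := #{j ∈ S | κ j = κ c}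
  have hP : #(permsPreserving κ) = N * #{π ∈ permsPreserving κ | π c = c} := by
    simpa using card_filter_inv_apply_mem_permsPreserving κ c univ
  have hNs : N ≤ s + k := by
    calc N ≤ #({j ∈ S | κ j = κ c} ∪ Sᶜ) := card_le_card fun j ↦ by by_cases j ∈ S <;> simp_all
      _ ≤ s + k := (card_union_le _ _).trans (by omega)
  have hm' : (0 : ℝ) < m := by exact_mod_cast hm
  have hmN : (1 : ℝ) ≤ N / m := (one_le_div hm').2 (by exact_mod_cast hclass)
  have hfrac : (1 - k / m : ℝ) * N ≤ s := by
    calc (1 - k / m : ℝ) * N = N - k * (N / m) := by ring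
      _ ≤ N - k := by gcongr; exact le_mul_of_one_le_right (by positivity) hmN
      _ ≤ s := by linarith [show (N : ℝ) ≤ s + k by exact_mod_cast hNs]
  rw [card_filter_inv_apply_mem_permsPreserving, hP]
  push_cast
  rw [← mul_assoc]
  exact mul_le_mul_of_nonneg_right hfrac (by positivity)

end Combinatorics

theorem le_biSup_of_mem {ι α : Type*} [Finite ι] [ConditionallyCompleteLattice α] {f : ι → α}
    {S : Finset ι} {j : ι} (hj : j ∈ S) : f j ≤ ⨆ i ∈ S, f i :=
  le_ciSup_of_le (Set.finite_range _).bddAbove j (by rw [ciSup_pos hj])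

theorem biSup_le_sum {ι : Type*} [Fintype ι] {f : ι → ℝ} (hf : ∀ i, 0 ≤ f i) (S : Finset ι) :
    ⨆ i ∈ S, f i ≤ ∑ i, f i :=
  have hsum := sum_nonneg fun i _ ↦ hf i
  Real.iSup_le (fun i ↦ Real.iSup_le (fun _ ↦ single_le_sum (fun j _ ↦ hf j) (mem_univ i)) hsum)
    hsum

theorem mul_iSup_le_sum_biSup_comp_perm {ι : Type*} [Finite ι] [Nonempty ι] [DecidableEq ι]
    {f : ι → ℝ} (hf : ∀ i, 0 ≤ f i) {G : Finset (Perm ι)} {S : Finset ι} {c : ℝ}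
    (hc : ∀ i, c * #G ≤ #{π ∈ G | π⁻¹ i ∈ S}) :
    c * #G * ⨆ i, f i ≤ ∑ π ∈ G, ⨆ i ∈ S, f (π i) := by
  obtain ⟨i₀, hi₀⟩ := Finite.exists_max f
  have hmax : ⨆ i, f i = f i₀ := le_antisymm (ciSup_le hi₀) (le_ciSup (Finite.bddAbove_range f) i₀)
  calc c * #G * ⨆ i, f i ≤ #{π ∈ G | π⁻¹ i₀ ∈ S} * f i₀ := by
        rw [hmax]; exact mul_le_mul_of_nonneg_right (hc i₀) (hf i₀)
    _ = ∑ π ∈ G with π⁻¹ i₀ ∈ S, f (π (π⁻¹ i₀)) := by simp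
    _ ≤ ∑ π ∈ G with π⁻¹ i₀ ∈ S, ⨆ i ∈ S, f (π i) :=
        sum_le_sum fun π hπ ↦ le_biSup_of_mem (f := f ∘ π) (mem_filter.1 hπ).2
    _ ≤ ∑ π ∈ G, ⨆ i ∈ S, f (π i) :=
        sum_le_sum_of_subset_of_nonneg (filter_subset _ _) fun π _ _ ↦
          Real.iSup_nonneg fun i ↦ Real.iSup_nonneg fun _ ↦ hf (π i)

namespace ProbabilityTheory

variable {Ω ι : Type*} [MeasurableSpace Ω] {μ : Measure Ω} [Fintype ι]

theorem iIndepFun.identDistrib_comp_perm [IsProbabilityMeasure μ] {β : Type*} [MeasurableSpace β]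
    {X : ι → Ω → β} (hX : ∀ i, AEMeasurable (X i) μ) (hindep : iIndepFun X μ) {π : Perm ι}
    (hπ : ∀ i, μ.map (X (π i)) = μ.map (X i)) :
    IdentDistrib (fun ω i ↦ X (π i) ω) (fun ω i ↦ X i ω) μ μ where
  aemeasurable_fst := aemeasurable_pi_lambda _ fun i ↦ hX (π i)
  aemeasurable_snd := aemeasurable_pi_lambda _ hX
  map_eq := by
    rw [(hindep.precomp π.injective).map_fun_eq_pi_map fun i ↦ hX (π i),
      hindep.map_fun_eq_pi_map hX]
    simp only [hπ]

theorem measurable_biSup {X : ι → Ω → ℝ} (hX : ∀ i, Measurable (X i)) (S : Finset ι) :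
    Measurable fun ω ↦ ⨆ i ∈ S, X i ω :=
  Measurable.iSup fun i ↦ Measurable.iSup fun _ ↦ hX i

theorem integrable_biSup {X : ι → Ω → ℝ} (hmeas : ∀ i, Measurable (X i))
    (hnn : ∀ i ω, 0 ≤ X i ω) (hint : ∀ i, Integrable (X i) μ) (S : Finset ι) :
    Integrable (fun ω ↦ ⨆ i ∈ S, X i ω) μ :=
  (integrable_finsetSum univ fun i _ ↦ hint i).mono'
    (measurable_biSup hmeas S).aestronglyMeasurable (ae_of_all _ fun ω ↦ by
      rw [Real.norm_of_nonneg (Real.iSup_nonneg fun i ↦ Real.iSup_nonneg fun _ ↦ hnn i ω)]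
      exact biSup_le_sum (hnn · ω) S)

theorem integral_biSup_comp_perm [IsProbabilityMeasure μ] {X : ι → Ω → ℝ}
    (hmeas : ∀ i, Measurable (X i)) (hindep : iIndepFun X μ) {π : Perm ι}
    (hπ : ∀ i, μ.map (X (π i)) = μ.map (X i)) (S : Finset ι) :
    ∫ ω, ⨆ i ∈ S, X (π i) ω ∂μ = ∫ ω, ⨆ i ∈ S, X i ω ∂μ :=
  ((hindep.identDistrib_comp_perm (fun i ↦ (hmeas i).aemeasurable) hπ).comp
    (measurable_biSup (fun i ↦ measurable_pi_apply i) S)).integral_eq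

theorem mul_integral_iSup_le_integral_biSup [IsProbabilityMeasure μ] [Nonempty ι] [DecidableEq ι]
    {X : ι → Ω → ℝ} (hmeas : ∀ i, Measurable (X i)) (hnn : ∀ i ω, 0 ≤ X i ω)
    (hint : ∀ i, Integrable (X i) μ) (hindep : iIndepFun X μ) {G : Finset (Perm ι)}
    (hG : ∀ π ∈ G, ∀ i, μ.map (X (π i)) = μ.map (X i)) (hG₀ : G.Nonempty) (S : Finset ι)
    {c : ℝ} (hc : ∀ i, c * #G ≤ #{π ∈ G | π⁻¹ i ∈ S}) :
    c * ∫ ω, ⨆ i, X i ω ∂μ ≤ ∫ ω, ⨆ i ∈ S, X i ω ∂μ := by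
  have hint_max : Integrable (fun ω ↦ ⨆ i, X i ω) μ := by
    simpa using integrable_biSup hmeas hnn hint univ
  have hint_perm : ∀ π : Perm ι, Integrable (fun ω ↦ ⨆ i ∈ S, X (π i) ω) μ := fun π ↦
    integrable_biSup (fun i ↦ hmeas (π i)) (fun i ↦ hnn (π i)) (fun i ↦ hint (π i)) S
  have hsum := integral_mono (hint_max.const_mul (c * #G))
    (integrable_finsetSum G fun π _ ↦ hint_perm π)
    fun ω ↦ mul_iSup_le_sum_biSup_comp_perm (hnn · ω) hc
  rw [integral_const_mul, integral_finsetSum G fun π _ ↦ hint_perm π,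
    sum_congr rfl fun π hπ ↦ integral_biSup_comp_perm hmeas hindep (hG π hπ) S, sum_const,
    nsmul_eq_mul, mul_comm c, mul_assoc] at hsum
  exact le_of_mul_le_mul_left hsum (by exact_mod_cast hG₀.card_pos)

end ProbabilityTheory

theorem frequent_coupling_general
    {Ω : Type} [MeasurableSpace Ω] (μ : Measure Ω) [IsProbabilityMeasure μ]
    (n m k : ℕ) (hn : 0 < n) (hm : 0 < m)
    (X : Fin n → Ω → ℝ)
    (hmeas : ∀ i, Measurable (X i))
    (hnn : ∀ i ω, 0 ≤ X i ω)
    (hint : ∀ i, Integrable (X i) μ)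
    (hindep : iIndepFun X μ)
    (hfreq : ∀ i : Fin n, m ≤ Set.ncard {j : Fin n | IdentDistrib (X j) (X i) μ μ})
    (S : Finset (Fin n)) (hS : n - k ≤ S.card) :
    (1 - (k : ℝ) / m) * (∫ ω, (⨆ i, X i ω) ∂μ) ≤ ∫ ω, (⨆ i ∈ S, X i ω) ∂μ := by
  classical
  have : Nonempty (Fin n) := ⟨⟨0, hn⟩⟩
  refine mul_integral_iSup_le_integral_biSup hmeas hnn hint hindep
    (G := permsPreserving fun i ↦ μ.map (X i)) (fun π ↦ mem_permsPreserving.1)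
    ⟨1, mem_permsPreserving.2 fun i ↦ rfl⟩ S fun i ↦
    one_sub_div_mul_card_permsPreserving_le _ hm ?_ (by rw [card_compl, Fintype.card_fin]; omega)
  have hclass : {j | IdentDistrib (X j) (X i) μ μ}
      = ↑({j | μ.map (X j) = μ.map (X i)} : Finset _) := by
    ext j
    simpa using ⟨IdentDistrib.map_eq, fun h ↦ ⟨(hmeas j).aemeasurable, (hmeas i).aemeasurable, h⟩⟩
  rw [← Set.ncard_coe_finset, ← hclass]
  exact hfreq i

/-- **The frequency coupling lemma** (Lemma 8 of the paper): if `X_1, …, X_n` is an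
`m`-frequent collection of independent, nonnegative, integrable random variables and
`S ⊆ {1,…,n}` has `|S| ≥ n − k` with `k ≤ m`, then
`E[max_{i ∈ S} X_i] ≥ (1 − k/m)·E[max_i X_i]`. -/
theorem frequent_coupling
    {Ω : Type} [MeasurableSpace Ω] (μ : Measure Ω) [IsProbabilityMeasure μ]
    (n m k : ℕ) (hn : 0 < n) (hm : 0 < m) (hkm : k ≤ m)
    (X : Fin n → Ω → ℝ)
    (hmeas : ∀ i, Measurable (X i))
    (hnn : ∀ i ω, 0 ≤ X i ω)
    (hint : ∀ i, Integrable (X i) μ)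
    (hindep : iIndepFun X μ)
    (hfreq : ∀ i : Fin n, m ≤ Set.ncard {j : Fin n | IdentDistrib (X j) (X i) μ μ})
    (S : Finset (Fin n)) (hS : n - k ≤ S.card) :
    (1 - (k : ℝ) / m) * (∫ ω, (⨆ i, X i ω) ∂μ) ≤ ∫ ω, (⨆ i ∈ S, X i ω) ∂μ :=
  frequent_coupling_general μ n m k hn hm X hmeas hnn hint hindep hfreq S hS
end
end

section
/- Let X_1, …, X_n be independent, nonnegative, integrable random variables and let MAX = E[max_i X_i]. For a permutation π of {1,…,n} and thresholds τ : {1,…,n} → ℝ_{≥0}, define U(π,τ) = Σ_{i=1}^{n} E[X_{π(i)}·1{X_{π(i)} ≥ τ(i)}]·∏_{j<i} P[X_{π(j)} < τ(j)], and let OPT_free = sup over all such (π,τ) of U(π,τ). Then for every ε ∈ (0,1), the supremum of U(π,τ) over pairs (π,τ) whose thresholds all lie in the finite set {max(1 − uε, 0)·MAX : u = 0, 1, …, ⌈1/ε⌉} is at least (1 − 2ε)·OPT_free. -/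
/-!
Fix the order. Every threshold policy is dominated by the optimal stopping rule, whose value on
the suffix starting at `k` is `d k = E[max (X k) (d (k+1))]`. Independence gives
`d k ≤ E[max_{j ≥ k} X j] ≤ MAX` (Jensen for `max (X k) ·` applied to the later maximum), and the
prophet inequality with the single threshold `MAX / 2` gives `MAX ≤ 2 d 0`.
Rounding every threshold `d (k+1)` down to a grid point at most `ε MAX` below it costs at most
`ε MAX` overall: by backward induction, a threshold at most `K` below `d (k+1)` loses at most `K`
when the policy stops and inherits the loss `K` of the continuation otherwise. Hence the grid
policy is worth at least `d 0 - ε MAX ≥ (1 - 2ε) d 0 ≥ (1 - 2ε) U(π, τ)`.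
-/

open MeasureTheory ProbabilityTheory

noncomputable section

/-- The expected reward `U(π,τ)` of the stateless threshold policy that inspects the
variables in the order `π` with thresholds `τ`:
`U(π,τ) = Σ_i E[X_{π(i)}·1{X_{π(i)} ≥ τ(i)}]·∏_{j<i} P[X_{π(j)} < τ(j)]`. -/
def policyValue {Ω : Type} [MeasurableSpace Ω] (μ : Measure Ω) {n : ℕ}
    (X : Fin n → Ω → ℝ) (π : Equiv.Perm (Fin n)) (τ : Fin n → ℝ) : ℝ :=
  ∑ i : Fin n,
    (∫ ω in {ω | τ i ≤ X (π i) ω}, X (π i) ω ∂μ) *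
      ∏ j ∈ Finset.Iio i, (μ {ω | X (π j) ω < τ j}).toReal

lemma iSup_sub_le_sum_posPart {ι : Type*} [Fintype ι] (x : ι → ℝ) {c : ℝ} (hc : 0 ≤ c) :
    (⨆ i, x i) - c ≤ ∑ i, (x i - c)⁺ := by
  have hsum : 0 ≤ ∑ i, (x i - c)⁺ := Finset.sum_nonneg fun i _ => posPart_nonneg _
  refine sub_le_iff_le_add.2 (Real.iSup_le (fun i => ?_) (by linarith))
  have := Finset.single_le_sum (fun j _ => posPart_nonneg (x j - c)) (Finset.mem_univ i)
  linarith [le_posPart (x i - c)]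

lemma mul_sSup_le_sSup {A B : Set ℝ} {c : ℝ} (hA : ∀ a ∈ A, 0 ≤ a) (hB : BddAbove B)
    (hB₀ : ∀ b ∈ B, 0 ≤ b) (h : ∀ a ∈ A, ∃ b ∈ B, c * a ≤ b) : c * sSup A ≤ sSup B := by
  rcases le_total 0 c with hc | hc
  · rw [← smul_eq_mul, ← Real.sSup_smul_of_nonneg hc]
    refine Real.sSup_le ?_ (Real.sSup_nonneg hB₀)
    rintro _ ⟨a, ha, rfl⟩
    obtain ⟨b, hb, hab⟩ := h a ha
    exact hab.trans (le_csSup hB hb)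
  · exact (mul_nonpos_of_nonpos_of_nonneg hc (Real.sSup_nonneg hA)).trans (Real.sSup_nonneg hB₀)

def thresholdGrid (ε M : ℝ) : Set ℝ :=
  {g | ∃ u : ℕ, u ≤ ⌈1 / ε⌉₊ ∧ g = max (1 - (u : ℝ) * ε) 0 * M}

lemma exists_mem_thresholdGrid {ε M x : ℝ} (hε : 0 < ε) (hx : x ∈ Set.Icc 0 M) :
    ∃ g ∈ thresholdGrid ε M, g ≤ x ∧ x - ε * M ≤ g := by
  obtain ⟨hx0, hxM⟩ := hx
  have hM : 0 ≤ M := hx0.trans hxM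
  set y := x / M
  have hy0 : 0 ≤ y := div_nonneg hx0 hM
  have hy1 : y ≤ 1 := div_le_one_of_le₀ hxM hM
  have hyM : y * M = x := div_mul_cancel_of_imp fun h => le_antisymm (h ▸ hxM) hx0
  set u := ⌈(1 - y) / ε⌉₊
  have hu : 1 - y ≤ u * ε := (div_le_iff₀ hε).1 (Nat.le_ceil _)
  have hu' : (u : ℝ) * ε < 1 - y + ε := by
    have := Nat.ceil_lt_add_one (div_nonneg (sub_nonneg.2 hy1) hε.le)
    calc (u : ℝ) * ε < ((1 - y) / ε + 1) * ε := mul_lt_mul_of_pos_right this hε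
      _ = 1 - y + ε := by field_simp
  refine ⟨_, ⟨u, Nat.ceil_mono (div_le_div_of_nonneg_right (by linarith) hε.le), rfl⟩, ?_, ?_⟩
  · rw [← hyM]
    exact mul_le_mul_of_nonneg_right (max_le (by linarith) hy0) hM
  · rw [← hyM, ← sub_mul]
    exact mul_le_mul_of_nonneg_right ((by linarith : y - ε ≤ 1 - u * ε).trans (le_max_left _ _)) hM

section MaxIntegrals

variable {Ω : Type*} [MeasurableSpace Ω] {μ : Measure Ω} {f h : Ω → ℝ}

lemma integral_max_const_eq [IsFiniteMeasure μ] (hf : Measurable f) (hfi : Integrable f μ)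
    (c : ℝ) :
    ∫ ω, max (f ω) c ∂μ =
      ∫ ω in {ω | c ≤ f ω}, f ω ∂μ + (μ {ω | f ω < c}).toReal * c := by
  have hs : MeasurableSet {ω | c ≤ f ω} := measurableSet_le measurable_const hf
  have hsc : {ω | c ≤ f ω}ᶜ = {ω | f ω < c} := by ext; simp
  have hmax : Integrable (fun ω => max (f ω) c) μ := hfi.sup (integrable_const c)
  rw [← integral_add_compl hs hmax, hsc]
  congr 1
  · exact setIntegral_congr_fun hs fun ω hω => max_eq_left hω
  · rw [setIntegral_congr_fun (measurableSet_lt hf measurable_const)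
      fun ω (hω : f ω < c) => max_eq_right hω.le, setIntegral_const, smul_eq_mul, measureReal_def]

lemma setIntegral_add_setIntegral_le_integral_max (hf : Measurable f) (hfi : Integrable f μ)
    (hhi : Integrable h μ) (t : ℝ) :
    ∫ ω in {ω | t ≤ f ω}, f ω ∂μ + ∫ ω in {ω | f ω < t}, h ω ∂μ ≤
      ∫ ω, max (f ω) (h ω) ∂μ := by
  have hs : MeasurableSet {ω | t ≤ f ω} := measurableSet_le measurable_const hf
  have hsc : {ω | t ≤ f ω}ᶜ = {ω | f ω < t} := by ext; simp
  have hmax : Integrable (fun ω => max (f ω) (h ω)) μ := hfi.sup hhi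
  rw [← integral_add_compl hs hmax, hsc]
  exact add_le_add
    (setIntegral_mono_on hfi.integrableOn hmax.integrableOn hs fun ω _ => le_max_left _ _)
    (setIntegral_mono_on hhi.integrableOn hmax.integrableOn (hsc ▸ hs.compl)
      fun ω _ => le_max_right _ _)

lemma integral_max_integral_le_of_indepFun [IsFiniteMeasure μ] (hf : Measurable f)
    (hfi : Integrable f μ) (hhi : Integrable h μ) (hind : IndepFun f h μ) :
    ∫ ω, max (f ω) (∫ x, h x ∂μ) ∂μ ≤ ∫ ω, max (f ω) (h ω) ∂μ := by
  set c := ∫ x, h x ∂μ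
  have hmean : ∫ ω in {ω | f ω < c}, h ω ∂μ = (μ {ω | f ω < c}).toReal * c :=
    Indep.setIntegral_eq_mul (f := id) hf.comap_le hind hhi.aemeasurable
      ⟨Set.Iio c, measurableSet_Iio, rfl⟩ aestronglyMeasurable_id
  calc ∫ ω, max (f ω) c ∂μ
      = ∫ ω in {ω | c ≤ f ω}, f ω ∂μ + ∫ ω in {ω | f ω < c}, h ω ∂μ := by
        rw [integral_max_const_eq hf hfi, hmean]
    _ ≤ ∫ ω, max (f ω) (h ω) ∂μ := setIntegral_add_setIntegral_le_integral_max hf hfi hhi c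

lemma setIntegral_const_le_eq [IsProbabilityMeasure μ] (hf : Measurable f) (hfi : Integrable f μ)
    (c : ℝ) :
    ∫ ω in {ω | c ≤ f ω}, f ω ∂μ =
      c * (1 - (μ {ω | f ω < c}).toReal) + ∫ ω, (f ω - c)⁺ ∂μ := by
  have hpos : Integrable (fun ω => (f ω - c)⁺) μ := (hfi.sub (integrable_const c)).pos_part
  have hmax : ∫ ω, max (f ω) c ∂μ = c + ∫ ω, (f ω - c)⁺ ∂μ := by
    have (x : ℝ) : max x c = c + (x - c)⁺ := by
      rw [posPart_def, ← max_add_add_left]; simp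
    simp_rw [this]
    rw [integral_add (integrable_const c) hpos, integral_const, probReal_univ, one_smul]
  linarith [integral_max_const_eq hf hfi c]

lemma integral_max_sub_le_of_threshold_near [IsProbabilityMeasure μ] (hf : Measurable f)
    (hfi : Integrable f μ) {s d K V : ℝ} (hsd : s ≤ d) (hdK : d - K ≤ s) (hV : d - K ≤ V) :
    ∫ ω, max (f ω) d ∂μ - K ≤
      ∫ ω in {ω | s ≤ f ω}, f ω ∂μ + (μ {ω | f ω < s}).toReal * V := by
  have hshift : ∫ ω, max (f ω) d ∂μ ≤ ∫ ω, max (f ω) s ∂μ + (d - s) := by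
    calc ∫ ω, max (f ω) d ∂μ ≤ ∫ ω, (max (f ω) s + (d - s)) ∂μ :=
          integral_mono (hfi.sup (integrable_const _))
            ((hfi.sup (integrable_const _)).add (integrable_const _)) fun ω =>
              max_le (by linarith [le_max_left (f ω) s]) (by linarith [le_max_right (f ω) s])
      _ = ∫ ω, max (f ω) s ∂μ + (d - s) := by
          rw [integral_add (f := fun ω => max (f ω) s) (hfi.sup (integrable_const _))
            (integrable_const _)]; simp
  rw [integral_max_const_eq hf hfi s] at hshift
  set q := (μ {ω | f ω < s}).toReal
  have hq0 : 0 ≤ q := ENNReal.toReal_nonneg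
  have hq1 : q ≤ 1 := measureReal_le_one
  nlinarith [mul_le_mul_of_nonneg_left hV hq0,
    mul_le_mul_of_nonneg_left (by linarith : d - s ≤ K) (by linarith : 0 ≤ 1 - q)]

end MaxIntegrals

section Families

variable {Ω : Type*} [MeasurableSpace Ω] {μ : Measure Ω}

lemma integrable_iSup_of_nonneg {ι : Type*} [Fintype ι] {f : ι → Ω → ℝ}
    (hf : ∀ i, Measurable (f i)) (hfi : ∀ i, Integrable (f i) μ) (hnn : ∀ i ω, 0 ≤ f i ω) :
    Integrable (fun ω => ⨆ i, f i ω) μ := by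
  refine (integrable_finsetSum Finset.univ fun i _ => hfi i).mono'
    (Measurable.iSup hf).aestronglyMeasurable (Filter.Eventually.of_forall fun ω => ?_)
  rw [Real.norm_of_nonneg (Real.iSup_nonneg fun i => hnn i ω)]
  exact Real.iSup_le (fun i => Finset.single_le_sum (fun j _ => hnn j ω) (Finset.mem_univ i))
    (Finset.sum_nonneg fun j _ => hnn j ω)

lemma ProbabilityTheory.iIndepFun.indepFun_iSup_succ {n : ℕ} {f : Fin (n + 1) → Ω → ℝ}
    (hind : iIndepFun f μ) (hf : ∀ i, Measurable (f i)) :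
    IndepFun (f 0) (fun ω => ⨆ i : Fin n, f i.succ ω) μ := by
  let head : ({0} : Finset (Fin (n + 1))) := ⟨0, Finset.mem_singleton_self 0⟩
  let succ (i : Fin n) : ({0}ᶜ : Finset (Fin (n + 1))) := ⟨i.succ, by simp [Fin.succ_ne_zero]⟩
  have hsup : Measurable fun v : ({0}ᶜ : Finset (Fin (n + 1))) → ℝ => ⨆ i, v (succ i) :=
    Measurable.iSup fun i => measurable_pi_apply (succ i)
  exact (hind.indepFun_finset {0} {0}ᶜ disjoint_compl_right hf).comp
    (measurable_pi_apply head) hsup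

end Families

section Policies

variable {Ω : Type} [MeasurableSpace Ω] {μ : Measure Ω}

lemma policyValue_nonneg {n : ℕ} {X : Fin n → Ω → ℝ} (hnn : ∀ i ω, 0 ≤ X i ω)
    (π : Equiv.Perm (Fin n)) (τ : Fin n → ℝ) : 0 ≤ policyValue μ X π τ :=
  Finset.sum_nonneg fun _ _ => mul_nonneg
    (setIntegral_nonneg_of_ae_restrict (Filter.Eventually.of_forall fun _ => hnn _ _))
    (Finset.prod_nonneg fun _ _ => ENNReal.toReal_nonneg)

lemma policyValue_succ {n : ℕ} (f : Fin (n + 1) → Ω → ℝ) (t : Fin (n + 1) → ℝ) :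
    policyValue μ f 1 t = ∫ ω in {ω | t 0 ≤ f 0 ω}, f 0 ω ∂μ +
      (μ {ω | f 0 ω < t 0}).toReal * policyValue μ (Fin.tail f) 1 (Fin.tail t) := by
  have hIio (i : Fin n) : Finset.Iio i.succ = insert 0 ((Finset.Iio i).map (Fin.succEmb n)) := by
    rw [Fin.map_succEmb_Iio]; ext j; simp
  simp only [policyValue, Equiv.Perm.one_apply, Fin.sum_univ_succ, Finset.mul_sum]
  congr 1
  · rw [show Finset.Iio (0 : Fin (n + 1)) = ∅ by ext; simp, Finset.prod_empty, mul_one]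
  · refine Finset.sum_congr rfl fun i _ => ?_
    rw [hIio, Finset.prod_insert (by simp), Finset.prod_map]
    simp only [Fin.coe_succEmb, Fin.tail]
    ring

/-- The value of the optimal adaptive stopping rule that inspects `f 0, f 1, …` in this order,
computed by backward induction. -/
def optimalValue (μ : Measure Ω) : (n : ℕ) → (Fin n → Ω → ℝ) → ℝ
  | 0, _ => 0
  | n + 1, f => ∫ ω, max (f 0 ω) (optimalValue μ n (Fin.tail f)) ∂μ

lemma optimalValue_nonneg : ∀ {n : ℕ} {f : Fin n → Ω → ℝ}, (∀ i ω, 0 ≤ f i ω) →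
    0 ≤ optimalValue μ n f
  | 0, _, _ => le_rfl
  | _ + 1, _, hnn => integral_nonneg fun ω => (hnn 0 ω).trans (le_max_left _ _)

variable [IsProbabilityMeasure μ]

lemma optimalValue_tail_le {n : ℕ} {f : Fin (n + 1) → Ω → ℝ} (hfi : Integrable (f 0) μ) :
    optimalValue μ n (Fin.tail f) ≤ optimalValue μ (n + 1) f := by
  calc optimalValue μ n (Fin.tail f) = ∫ _, optimalValue μ n (Fin.tail f) ∂μ := by simp
    _ ≤ optimalValue μ (n + 1) f :=
      integral_mono (integrable_const _) (hfi.sup (integrable_const _)) fun ω => le_max_right _ _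

lemma policyValue_le_optimalValue : ∀ {n : ℕ} {f : Fin n → Ω → ℝ} (t : Fin n → ℝ),
    (∀ i, Measurable (f i)) → (∀ i, Integrable (f i) μ) →
    policyValue μ f 1 t ≤ optimalValue μ n f
  | 0, _, _, _, _ => by simp [policyValue, optimalValue]
  | n + 1, f, t, hf, hfi => by
    rw [policyValue_succ]
    have hq : 0 ≤ (μ {ω | f 0 ω < t 0}).toReal := ENNReal.toReal_nonneg
    have ih := policyValue_le_optimalValue (f := Fin.tail f) (Fin.tail t)
      (fun i => hf i.succ) fun i => hfi i.succ
    calc _ ≤ ∫ ω in {ω | t 0 ≤ f 0 ω}, f 0 ω ∂μ +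
          ∫ ω in {ω | f 0 ω < t 0}, optimalValue μ n (Fin.tail f) ∂μ := by
          rw [setIntegral_const, smul_eq_mul, measureReal_def]; gcongr
      _ ≤ optimalValue μ (n + 1) f :=
        setIntegral_add_setIntegral_le_integral_max (hf 0) (hfi 0) (integrable_const _) _

lemma optimalValue_le_integral_iSup : ∀ {n : ℕ} {f : Fin n → Ω → ℝ},
    (∀ i, Measurable (f i)) → (∀ i, Integrable (f i) μ) → (∀ i ω, 0 ≤ f i ω) →
    iIndepFun f μ → optimalValue μ n f ≤ ∫ ω, ⨆ i, f i ω ∂μ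
  | 0, _, _, _, _, _ => by simp [optimalValue]
  | n + 1, f, hf, hfi, hnn, hind => by
    have ih := optimalValue_le_integral_iSup (f := Fin.tail f) (fun i => hf (Fin.succ i))
      (fun i => hfi (Fin.succ i)) (fun i => hnn (Fin.succ i))
      (hind.precomp (g := Fin.succ) (Fin.succ_injective n))
    have htail := integrable_iSup_of_nonneg (fun i : Fin n => hf i.succ)
      (fun i => hfi i.succ) fun i => hnn i.succ
    calc optimalValue μ (n + 1) f
        ≤ ∫ ω, max (f 0 ω) (∫ x, ⨆ i : Fin n, f i.succ x ∂μ) ∂μ :=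
          integral_mono ((hfi 0).sup (integrable_const _)) ((hfi 0).sup (integrable_const _))
            fun ω => max_le_max le_rfl ih
      _ ≤ ∫ ω, max (f 0 ω) (⨆ i : Fin n, f i.succ ω) ∂μ :=
          integral_max_integral_le_of_indepFun (hf 0) (hfi 0) htail (hind.indepFun_iSup_succ hf)
      _ ≤ ∫ ω, ⨆ i, f i ω ∂μ :=
          integral_mono ((hfi 0).sup htail) (integrable_iSup_of_nonneg hf hfi hnn) fun ω =>
            max_le (le_ciSup (f := (f · ω)) (Finite.bddAbove_range _) 0)
              (Real.iSup_le (fun i => le_ciSup (f := (f · ω)) (Finite.bddAbove_range _) i.succ)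
                (Real.iSup_nonneg fun i => hnn i ω))

lemma le_policyValue_const (c : ℝ) : ∀ {n : ℕ} {f : Fin n → Ω → ℝ},
    (∀ i, Measurable (f i)) → (∀ i, Integrable (f i) μ) →
    c * (1 - ∏ i, (μ {ω | f i ω < c}).toReal) +
        (∏ i, (μ {ω | f i ω < c}).toReal) * ∑ i, ∫ ω, (f i ω - c)⁺ ∂μ ≤
      policyValue μ f 1 fun _ => c
  | 0, _, _, _ => by simp [policyValue]
  | n + 1, f, hf, hfi => by
    have ih : c * (1 - ∏ i : Fin n, (μ {ω | f i.succ ω < c}).toReal) +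
        (∏ i : Fin n, (μ {ω | f i.succ ω < c}).toReal) * ∑ i : Fin n, ∫ ω, (f i.succ ω - c)⁺ ∂μ ≤
        policyValue μ (Fin.tail f) 1 fun _ => c :=
      le_policyValue_const c (fun i => hf (Fin.succ i)) fun i => hfi (Fin.succ i)
    rw [policyValue_succ, setIntegral_const_le_eq (hf 0) (hfi 0), Fin.prod_univ_succ,
      Fin.sum_univ_succ, show Fin.tail (fun _ => c) = fun _ => c from rfl]
    set q := (μ {ω | f 0 ω < c}).toReal
    set P := ∏ i : Fin n, (μ {ω | f i.succ ω < c}).toReal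
    have hq0 : 0 ≤ q := ENNReal.toReal_nonneg
    have hq1 : q ≤ 1 := measureReal_le_one
    have hP0 : 0 ≤ P := Finset.prod_nonneg fun _ _ => ENNReal.toReal_nonneg
    have hP1 : P ≤ 1 := Finset.prod_le_one (fun _ _ => ENNReal.toReal_nonneg)
      fun _ _ => measureReal_le_one
    have hE : 0 ≤ ∫ ω, (f 0 ω - c)⁺ ∂μ := integral_nonneg fun ω => posPart_nonneg _
    nlinarith [mul_le_mul_of_nonneg_left ih hq0, mul_le_one₀ hq1 hP0 hP1]

lemma integral_iSup_le_two_mul_optimalValue {n : ℕ} {f : Fin n → Ω → ℝ}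
    (hf : ∀ i, Measurable (f i)) (hfi : ∀ i, Integrable (f i) μ) (hnn : ∀ i ω, 0 ≤ f i ω) :
    ∫ ω, ⨆ i, f i ω ∂μ ≤ 2 * optimalValue μ n f := by
  set M := ∫ ω, ⨆ i, f i ω ∂μ
  set P := ∏ i, (μ {ω | f i ω < M / 2}).toReal
  have hM : 0 ≤ M := integral_nonneg fun ω => Real.iSup_nonneg fun i => hnn i ω
  have hP0 : 0 ≤ P := Finset.prod_nonneg fun _ _ => ENNReal.toReal_nonneg
  have hpos (i : Fin n) : Integrable (fun ω => (f i ω - M / 2)⁺) μ :=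
    ((hfi i).sub (integrable_const _)).pos_part
  have hS : M - M / 2 ≤ ∑ i, ∫ ω, (f i ω - M / 2)⁺ ∂μ := by
    calc M - M / 2 = ∫ ω, ((⨆ i, f i ω) - M / 2) ∂μ := by
          rw [integral_sub (integrable_iSup_of_nonneg hf hfi hnn) (integrable_const _)]; simp [M]
      _ ≤ ∫ ω, ∑ i, (f i ω - M / 2)⁺ ∂μ :=
          integral_mono ((integrable_iSup_of_nonneg hf hfi hnn).sub (integrable_const _))
            (integrable_finsetSum _ fun i _ => hpos i)
            fun ω => iSup_sub_le_sum_posPart _ (by positivity)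
      _ = ∑ i, ∫ ω, (f i ω - M / 2)⁺ ∂μ := integral_finsetSum _ fun i _ => hpos i
  have := (le_policyValue_const (M / 2) hf hfi).trans (policyValue_le_optimalValue _ hf hfi)
  nlinarith [mul_le_mul_of_nonneg_left hS hP0]

theorem exists_policyValue_ge_optimalValue_sub {G : Set ℝ} {K M : ℝ} (hK : 0 ≤ K)
    (hG : ∀ x ∈ Set.Icc 0 M, ∃ g ∈ G, g ≤ x ∧ x - K ≤ g) :
    ∀ {n : ℕ} {f : Fin n → Ω → ℝ}, (∀ i, Measurable (f i)) → (∀ i, Integrable (f i) μ) →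
      (∀ i ω, 0 ≤ f i ω) → optimalValue μ n f ≤ M →
      ∃ t : Fin n → ℝ, (∀ i, t i ∈ G) ∧ optimalValue μ n f - K ≤ policyValue μ f 1 t
  | 0, _, _, _, _, _ => ⟨Fin.elim0, fun i => i.elim0, by simp [optimalValue, policyValue, hK]⟩
  | n + 1, f, hf, hfi, hnn, hM => by
    have htail := optimalValue_tail_le (f := f) (hfi 0)
    obtain ⟨g, hgG, hgd, hdg⟩ :=
      hG _ ⟨optimalValue_nonneg fun i => hnn (Fin.succ i), htail.trans hM⟩
    obtain ⟨t, htG, ht⟩ := exists_policyValue_ge_optimalValue_sub hK hG (f := Fin.tail f)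
      (fun i => hf (Fin.succ i)) (fun i => hfi (Fin.succ i)) (fun i => hnn (Fin.succ i))
      (htail.trans hM)
    refine ⟨Fin.cons g t, Fin.cases hgG htG, ?_⟩
    rw [policyValue_succ, Fin.cons_zero, Fin.tail_cons]
    exact integral_max_sub_le_of_threshold_near (hf 0) (hfi 0) hgd hdg ht

theorem exists_thresholdGrid_policyValue_ge {n : ℕ} {f : Fin n → Ω → ℝ} {ε : ℝ} (hε : 0 < ε)
    (hf : ∀ i, Measurable (f i)) (hfi : ∀ i, Integrable (f i) μ) (hnn : ∀ i ω, 0 ≤ f i ω)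
    (hind : iIndepFun f μ) (t : Fin n → ℝ) :
    ∃ t' : Fin n → ℝ, (∀ i, t' i ∈ thresholdGrid ε (∫ ω, ⨆ i, f i ω ∂μ)) ∧
      (1 - 2 * ε) * policyValue μ f 1 t ≤ policyValue μ f 1 t' := by
  have hM : 0 ≤ ∫ ω, ⨆ i, f i ω ∂μ := integral_nonneg fun ω => Real.iSup_nonneg fun i => hnn i ω
  have hdM := optimalValue_le_integral_iSup hf hfi hnn hind
  have hMd := integral_iSup_le_two_mul_optimalValue hf hfi hnn
  obtain ⟨t', ht'G, ht'⟩ := exists_policyValue_ge_optimalValue_sub (mul_nonneg hε.le hM)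
    (fun x hx => exists_mem_thresholdGrid hε hx) hf hfi hnn hdM
  refine ⟨t', ht'G, ?_⟩
  have hv := policyValue_le_optimalValue t hf hfi
  have hv0 := policyValue_nonneg (μ := μ) hnn 1 t
  have hw0 := policyValue_nonneg (μ := μ) hnn 1 t'
  rcases le_total 0 (1 - 2 * ε) with hc | hc
  · nlinarith [mul_le_mul_of_nonneg_left hv hc]
  · nlinarith [mul_nonpos_of_nonpos_of_nonneg hc hv0]

end Policies

theorem threshold_discretization_general
    {Ω : Type} [MeasurableSpace Ω] (μ : Measure Ω) [IsProbabilityMeasure μ]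
    (n : ℕ) (X : Fin n → Ω → ℝ)
    (hmeas : ∀ i, Measurable (X i))
    (hnn : ∀ i ω, 0 ≤ X i ω)
    (hint : ∀ i, Integrable (X i) μ)
    (hindep : iIndepFun X μ)
    (ε : ℝ) (hε : ε ∈ Set.Ioo (0:ℝ) 1) :
    (1 - 2 * ε) *
        sSup {v | ∃ (π : Equiv.Perm (Fin n)) (τ : Fin n → ℝ),
          (∀ i, 0 ≤ τ i) ∧ v = policyValue μ X π τ} ≤
      sSup {v | ∃ (π : Equiv.Perm (Fin n)) (τ : Fin n → ℝ),
          (∀ i, ∃ u : ℕ, u ≤ Nat.ceil (1 / ε) ∧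
            τ i = max (1 - (u : ℝ) * ε) 0 * (∫ ω, (⨆ i', X i' ω) ∂μ)) ∧
          v = policyValue μ X π τ} := by
  have hperm (π : Equiv.Perm (Fin n)) :
      ∫ ω, (⨆ i, X (π i) ω) ∂μ = ∫ ω, (⨆ i, X i ω) ∂μ := by
    congr with ω
    exact π.iSup_comp (g := (X · ω))
  have hindπ (π : Equiv.Perm (Fin n)) : iIndepFun (fun i => X (π i)) μ :=
    hindep.precomp π.injective
  -- `policyValue μ X π τ` is definitionally `policyValue μ (fun i => X (π i)) 1 τ`.
  refine mul_sSup_le_sSup ?_ ⟨∫ ω, (⨆ i, X i ω) ∂μ, ?_⟩ ?_ ?_ <;> rintro _ ⟨π, τ, -, rfl⟩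
  · exact policyValue_nonneg hnn π τ
  · exact hperm π ▸ (policyValue_le_optimalValue τ (fun i => hmeas _) fun i => hint _).trans
      (optimalValue_le_integral_iSup (fun i => hmeas _) (fun i => hint _) (fun i _ => hnn _ _)
        (hindπ π))
  · exact policyValue_nonneg hnn π τ
  · obtain ⟨τ', hτ', hle⟩ := exists_thresholdGrid_policyValue_ge hε.1 (fun i => hmeas (π i))
      (fun i => hint _) (fun i _ => hnn _ _) (hindπ π) τ
    exact ⟨_, ⟨π, τ', fun i => hperm π ▸ hτ' i, rfl⟩, hle⟩

/-- **Threshold discretization** (Lemma 12 of the paper): for independent nonnegative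
integrable random variables, the supremum of `U(π,τ)` over stateless policies whose
thresholds all lie in the finite grid `{max(1 − uε, 0)·MAX : 0 ≤ u ≤ ⌈1/ε⌉}` is at least
`(1 − 2ε)` times `OPT_free = sup U(π,τ)` over all stateless policies with nonnegative
thresholds. -/
theorem threshold_discretization
    {Ω : Type} [MeasurableSpace Ω] (μ : Measure Ω) [IsProbabilityMeasure μ]
    (n : ℕ) (hn : 0 < n) (X : Fin n → Ω → ℝ)
    (hmeas : ∀ i, Measurable (X i))
    (hnn : ∀ i ω, 0 ≤ X i ω)
    (hint : ∀ i, Integrable (X i) μ)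
    (hindep : iIndepFun X μ)
    (ε : ℝ) (hε : ε ∈ Set.Ioo (0:ℝ) 1) :
    (1 - 2 * ε) *
        sSup {v | ∃ (π : Equiv.Perm (Fin n)) (τ : Fin n → ℝ),
          (∀ i, 0 ≤ τ i) ∧ v = policyValue μ X π τ} ≤
      sSup {v | ∃ (π : Equiv.Perm (Fin n)) (τ : Fin n → ℝ),
          (∀ i, ∃ u : ℕ, u ≤ Nat.ceil (1 / ε) ∧
            τ i = max (1 - (u : ℝ) * ε) 0 * (∫ ω, (⨆ i', X i' ω) ∂μ)) ∧
          v = policyValue μ X π τ} :=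
  threshold_discretization_general μ n X hmeas hnn hint hindep ε hε
end
end

section
/- Let n ≥ 1, let λ_1 ≥ λ_2 ≥ … ≥ λ_n ≥ 0 be reals, and let p_1, …, p_n ∈ [0,1]. Then for every permutation σ of {1,…,n}: Σ_{i=1}^{n} λ_{σ(i)}·(1 − p_{σ(i)})·∏_{j<i} p_{σ(j)} ≤ Σ_{i=1}^{n} λ_i·(1 − p_i)·∏_{j<i} p_j. In other words, among all orderings of the pairs (λ_i, p_i), the expected reward Σ_i λ_i(1−p_i)∏_{j<i}p_j is maximized by processing the pairs in nonincreasing order of λ. -/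
/-! Abel summation writes `λ` as a nonnegative combination of the indicators of the prefixes
`{1, …, k}`, and the reward is linear in `λ`. For the indicator of `{1, …, k}` the reward is the
probability of stopping at one of the first `k` pairs; under any ordering this is at most
`1 - ∏_{i ≤ k} p_i`, with equality for the identity ordering, which examines them first. -/

open Finset

section AbelSummation

variable {ι R : Type*} [LinearOrder ι] [CommRing R] [PartialOrder R] [IsOrderedRing R]

theorem sum_mul_nonneg_of_antitoneOn {s : Finset ι} {lam c : ι → R}
    (hanti : AntitoneOn lam s) (hlam : ∀ i ∈ s, 0 ≤ lam i)
    (hc : ∀ k ∈ s, 0 ≤ ∑ i ∈ s with i ≤ k, c i) :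
    0 ≤ ∑ i ∈ s, lam i * c i := by
  classical
  induction s using Finset.induction_on_max generalizing lam with
  | empty => simp
  | insert m s hlt ih =>
    have hms : m ∉ s := fun h => lt_irrefl m (hlt m h)
    have hfilter_m : ({i ∈ insert m s | i ≤ m} : Finset ι) = insert m s :=
      filter_true_of_mem fun i hi => by
        rcases mem_insert.mp hi with rfl | hi
        exacts [le_rfl, (hlt i hi).le]
    have hfilter : ∀ k ∈ s, ({i ∈ insert m s | i ≤ k} : Finset ι) = {i ∈ s | i ≤ k} := by
      intro k hk
      rw [filter_insert, if_neg (not_le.mpr (hlt k hk))]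
    have hsplit : ∑ i ∈ insert m s, lam i * c i =
        lam m * ∑ i ∈ insert m s, c i + ∑ i ∈ s, (lam i - lam m) * c i := by
      simp only [sum_insert hms, sub_mul, sum_sub_distrib, mul_add, mul_sum]
      ring
    rw [hsplit]
    refine add_nonneg (mul_nonneg (hlam m (mem_insert_self m s)) ?_) (ih ?_ ?_ ?_)
    · simpa [hfilter_m] using hc m (mem_insert_self m s)
    · exact fun i hi j hj hij =>
        sub_le_sub_right (hanti (mem_insert_of_mem hi) (mem_insert_of_mem hj) hij) _
    · exact fun i hi => sub_nonneg.mpr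
        (hanti (mem_insert_of_mem hi) (mem_insert_self m s) (hlt i hi).le)
    · intro k hk
      simpa [hfilter k hk] using hc k (mem_insert_of_mem hk)

theorem sum_mul_le_sum_mul_of_antitoneOn {s : Finset ι} {lam a b : ι → R}
    (hanti : AntitoneOn lam s) (hlam : ∀ i ∈ s, 0 ≤ lam i)
    (hab : ∀ k ∈ s, ∑ i ∈ s with i ≤ k, a i ≤ ∑ i ∈ s with i ≤ k, b i) :
    ∑ i ∈ s, lam i * a i ≤ ∑ i ∈ s, lam i * b i := by
  have := sum_mul_nonneg_of_antitoneOn (c := b - a) hanti hlam fun k hk => by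
    simpa [sum_sub_distrib] using hab k hk
  simpa [mul_sub, sum_sub_distrib] using this

end AbelSummation

theorem one_sub_prod_eq_sum_mul_prod_filter_lt {ι R : Type*} [LinearOrder ι] [CommRing R]
    (s : Finset ι) (q : ι → R) :
    1 - ∏ i ∈ s, q i = ∑ i ∈ s, (1 - q i) * ∏ j ∈ s with j < i, q j := by
  have h := prod_one_sub_ordered s fun i => 1 - q i
  simp only [sub_sub_cancel] at h
  rw [h, sub_sub_cancel]

section StopProb

variable {ι : Type*} [LinearOrder ι] [LocallyFiniteOrderBot ι]

/-- The probability of stopping exactly at step `i` when steps are taken in increasing order and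
step `j` is passed with probability `q j`. -/
def stopProb (q : ι → ℝ) (i : ι) : ℝ :=
  (1 - q i) * ∏ j ∈ Iio i, q j

theorem sum_stopProb_Iic (q : ι → ℝ) (k : ι) :
    ∑ i ∈ Iic k, stopProb q i = 1 - ∏ i ∈ Iic k, q i := by
  rw [one_sub_prod_eq_sum_mul_prod_filter_lt]
  refine sum_congr rfl fun i hi => congrArg _ (prod_congr ?_ fun _ _ => rfl)
  ext j
  simp only [mem_filter, mem_Iic, mem_Iio]
  exact ⟨fun hj => ⟨hj.le.trans (mem_Iic.mp hi), hj⟩, And.right⟩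

theorem sum_stopProb_le {q : ι → ℝ} (hq : ∀ i, q i ∈ Set.Icc (0 : ℝ) 1) (T : Finset ι) :
    ∑ i ∈ T, stopProb q i ≤ 1 - ∏ i ∈ T, q i := by
  rw [one_sub_prod_eq_sum_mul_prod_filter_lt]
  refine sum_le_sum fun i _ => mul_le_mul_of_nonneg_left ?_ (sub_nonneg.mpr (hq i).2)
  exact prod_le_prod_of_subset_of_le_one (fun j hj => mem_Iio.mpr (mem_filter.mp hj).2)
    (fun j _ => (hq j).1) fun j _ _ => (hq j).2

end StopProb

theorem sorting_by_lambda_optimal_general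
    (n : ℕ) (lam p : Fin n → ℝ)
    (hanti : Antitone lam) (hlam : ∀ i, 0 ≤ lam i)
    (hp : ∀ i, p i ∈ Set.Icc (0:ℝ) 1)
    (σ : Equiv.Perm (Fin n)) :
    (∑ i : Fin n, lam (σ i) * (1 - p (σ i)) * ∏ j ∈ Finset.Iio i, p (σ j)) ≤
      ∑ i : Fin n, lam i * (1 - p i) * ∏ j ∈ Finset.Iio i, p j := by
  have hprefix : ∀ k, ∑ m ∈ Iic k, stopProb (p ∘ σ) (σ.symm m) ≤ ∑ m ∈ Iic k, stopProb p m := by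
    intro k
    calc ∑ m ∈ Iic k, stopProb (p ∘ σ) (σ.symm m)
        = ∑ i ∈ (Iic k).map σ.symm.toEmbedding, stopProb (p ∘ σ) i :=
          (sum_map (Iic k) σ.symm.toEmbedding _).symm
      _ ≤ 1 - ∏ i ∈ (Iic k).map σ.symm.toEmbedding, p (σ i) := sum_stopProb_le (fun i => hp _) _
      _ = ∑ m ∈ Iic k, stopProb p m := by simp [prod_map, sum_stopProb_Iic]
  calc (∑ i, lam (σ i) * (1 - p (σ i)) * ∏ j ∈ Iio i, p (σ j))
      = ∑ m, lam m * stopProb (p ∘ σ) (σ.symm m) := by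
        rw [← Equiv.sum_comp σ fun m => lam m * stopProb (p ∘ σ) (σ.symm m)]
        simp [stopProb, mul_assoc]
    _ ≤ ∑ m, lam m * stopProb p m :=
        sum_mul_le_sum_mul_of_antitoneOn (hanti.antitoneOn _) (fun i _ => hlam i)
          fun k _ => by simpa [filter_ge_eq_Iic] using hprefix k
    _ = ∑ i, lam i * (1 - p i) * ∏ j ∈ Iio i, p j := by simp only [stopProb, mul_assoc]

/-- **Sorting by `λ` is optimal** (Lemma 14 of the paper): given nonincreasing
`λ_1 ≥ … ≥ λ_n ≥ 0` and probabilities `p_i ∈ [0,1]`, the expected reward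
`Σ_i λ_i·(1 − p_i)·∏_{j<i} p_j` of a threshold stopping policy is maximized, over all
orderings `σ` of the pairs `(λ_i, p_i)`, by the identity ordering. -/
theorem sorting_by_lambda_optimal
    (n : ℕ) (hn : 0 < n) (lam p : Fin n → ℝ)
    (hanti : Antitone lam) (hlam : ∀ i, 0 ≤ lam i)
    (hp : ∀ i, p i ∈ Set.Icc (0:ℝ) 1)
    (σ : Equiv.Perm (Fin n)) :
    (∑ i : Fin n, lam (σ i) * (1 - p (σ i)) * ∏ j ∈ Finset.Iio i, p (σ j)) ≤
      ∑ i : Fin n, lam i * (1 - p i) * ∏ j ∈ Finset.Iio i, p j :=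
  sorting_by_lambda_optimal_general n lam p hanti hlam hp σ
end

section
/- Let N ≥ 1, let λ_1 ≥ λ_2 ≥ … ≥ λ_N ≥ 0 be reals, and let p_1, …, p_N ∈ (0,1]. Then the function f : ℝ^N → ℝ defined by f(z) = Σ_{ℓ=1}^{N} λ_ℓ·(∏_{ℓ'=1}^{ℓ−1} p_{ℓ'}^{z_{ℓ'}} − ∏_{ℓ'=1}^{ℓ} p_{ℓ'}^{z_{ℓ'}}) is concave on ℝ^N. -/
/-!
Writing `P_ℓ(z) = ∏_{ℓ' < ℓ} p_{ℓ'}^{z_{ℓ'}}`, the objective is `Σ_ℓ λ_ℓ (P_ℓ - P_{ℓ+1})`.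
Summation by parts turns it into `Σ_ℓ (λ_ℓ - λ_{ℓ+1}) (1 - P_{ℓ+1})` with `λ_{N+1} = 0`, whose
coefficients are nonnegative since `λ` is antitone and nonnegative. Each `P_ℓ` is the
exponential of the linear form `z ↦ Σ_{ℓ' < ℓ} z_{ℓ'} log p_{ℓ'}`, hence convex.
-/

open Finset

theorem concaveOn_sum {ι 𝕜 E β : Type*} [Semiring 𝕜] [PartialOrder 𝕜] [AddCommMonoid E] [SMul 𝕜 E]
    [AddCommMonoid β] [PartialOrder β] [IsOrderedAddMonoid β] [Module 𝕜 β] {s : Set E}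
    (t : Finset ι) {f : ι → E → β} (hs : Convex 𝕜 s) (hf : ∀ i ∈ t, ConcaveOn 𝕜 s (f i)) :
    ConcaveOn 𝕜 s (fun z => ∑ i ∈ t, f i z) := by
  classical
  induction t using Finset.induction_on with
  | empty => simpa using concaveOn_const (0 : β) hs
  | insert a t ha ih =>
    simp only [sum_insert ha]
    exact (hf a (mem_insert_self a t)).add (ih fun i hi => hf i (mem_insert_of_mem hi))

theorem sum_range_mul_sub_succ_eq {R : Type*} [CommRing R] (a b : ℕ → R) (n : ℕ) :
    ∑ i ∈ range n, a i * (b i - b (i + 1)) =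
      ∑ i ∈ range n, (a i - a (i + 1)) * (b 0 - b (i + 1)) + a n * (b 0 - b n) := by
  induction n with
  | zero => simp
  | succ n ih => rw [sum_range_succ, sum_range_succ, ih]; ring

theorem concaveOn_sum_range_mul_sub_succ {𝕜 E : Type*} [CommRing 𝕜] [PartialOrder 𝕜]
    [IsOrderedRing 𝕜] [AddCommMonoid E] [SMul 𝕜 E] {s : Set E} {a : ℕ → 𝕜} {g : ℕ → E → 𝕜} {n : ℕ}
    (hs : Convex 𝕜 s) (ha : Antitone a) (hn : 0 ≤ a n)
    (hg₀ : ConcaveOn 𝕜 s (g 0)) (hg : ∀ i, ConvexOn 𝕜 s (g (i + 1))) :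
    ConcaveOn 𝕜 s (fun z => ∑ i ∈ range n, a i * (g i z - g (i + 1) z)) := by
  rcases n with _ | n
  · simpa using concaveOn_const 0 hs
  simp_rw [sum_range_mul_sub_succ_eq a (g · _)]
  refine (concaveOn_sum _ hs fun i _ => ?_).add ((hg₀.sub (hg n)).smul hn)
  exact (hg₀.sub (hg i)).smul (sub_nonneg.2 (ha i.le_succ))

theorem convexOn_prod_rpow {ι : Type*} (t : Finset ι) {p : ι → ℝ} (hp : ∀ i ∈ t, 0 < p i) :
    ConvexOn ℝ Set.univ (fun z : ι → ℝ => ∏ i ∈ t, p i ^ z i) := by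
  let L : (ι → ℝ) →ₗ[ℝ] ℝ := ∑ i ∈ t, Real.log (p i) • LinearMap.proj i
  have h : (fun z : ι → ℝ => ∏ i ∈ t, p i ^ z i) = Real.exp ∘ L := by
    funext z
    simp only [L, Function.comp_apply, LinearMap.coe_sum, LinearMap.coe_smul, LinearMap.coe_proj,
      Finset.sum_apply, Pi.smul_apply, Function.eval, smul_eq_mul, Real.exp_sum]
    exact prod_congr rfl fun i hi => Real.rpow_def_of_pos (hp i hi) _
  rw [h]
  exact convexOn_exp.comp_linearMap L

def extendByZero {α : Type*} [Zero α] {N : ℕ} (f : Fin N → α) (i : ℕ) : α :=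
  if h : i < N then f ⟨i, h⟩ else 0

theorem antitone_extendByZero {α : Type*} [Preorder α] [Zero α] {N : ℕ} {f : Fin N → α}
    (hf : Antitone f) (hf₀ : ∀ i, 0 ≤ f i) : Antitone (extendByZero f) := by
  intro i j hij
  unfold extendByZero
  split_ifs with hj hi hi
  · exact hf (Fin.mk_le_mk.2 hij)
  · omega
  · exact hf₀ _
  · exact le_rfl

theorem relaxation_objective_concave_general
    (N : ℕ) (lam p : Fin N → ℝ)
    (hanti : Antitone lam) (hlam : ∀ i, 0 ≤ lam i)
    (hp : ∀ i, p i ∈ Set.Ioc (0:ℝ) 1) :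
    ConcaveOn ℝ Set.univ (fun z : Fin N → ℝ =>
      ∑ l : Fin N, lam l *
        ((∏ l' ∈ Finset.Iio l, p l' ^ z l') - ∏ l' ∈ Finset.Iic l, p l' ^ z l')) := by
  let P (m : ℕ) (z : Fin N → ℝ) : ℝ := ∏ l ∈ univ.filter (fun l : Fin N => (l : ℕ) < m), p l ^ z l
  refine (concaveOn_sum_range_mul_sub_succ (n := N) (g := P) convex_univ
    (antitone_extendByZero hanti hlam) (by simp [extendByZero])
    (by simpa [P] using concaveOn_const 1 convex_univ)
    fun i => convexOn_prod_rpow _ fun l _ => (hp l).1).congr fun z _ => ?_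
  beta_reduce
  rw [← Fin.sum_univ_eq_sum_range (fun i => extendByZero lam i * (P i z - P (i + 1) z))]
  refine sum_congr rfl fun l _ => ?_
  have hIio : Iio l = univ.filter (fun l' : Fin N => (l' : ℕ) < l) := by ext; simp
  have hIic : Iic l = univ.filter (fun l' : Fin N => (l' : ℕ) < l + 1) := by ext; simp
  simp [extendByZero, P, hIio, hIic]

/-- **Concavity of the relaxation objective** (Lemma 16 of the paper): for
`λ_1 ≥ … ≥ λ_N ≥ 0` and `p_1, …, p_N ∈ (0,1]`, the function
`f(z) = Σ_ℓ λ_ℓ·(∏_{ℓ'<ℓ} p_{ℓ'}^{z_{ℓ'}} − ∏_{ℓ'≤ℓ} p_{ℓ'}^{z_{ℓ'}})`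
is concave on `ℝ^N` (here `p^z = exp(z·log p)` is the real power). -/
theorem relaxation_objective_concave
    (N : ℕ) (hN : 0 < N) (lam p : Fin N → ℝ)
    (hanti : Antitone lam) (hlam : ∀ i, 0 ≤ lam i)
    (hp : ∀ i, p i ∈ Set.Ioc (0:ℝ) 1) :
    ConcaveOn ℝ Set.univ (fun z : Fin N → ℝ =>
      ∑ l : Fin N, lam l *
        ((∏ l' ∈ Finset.Iio l, p l' ^ z l') - ∏ l' ∈ Finset.Iic l, p l' ^ z l')) :=
  relaxation_objective_concave_general N lam p hanti hlam hp
end
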